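/- arXiv:2006.09371 — 3 statements merged into one kernel-verified Lean document; each statement's English description precedes it below -/
import Mathlib

section
/- Let X be a proper submodule of M. The following are equivalent: (1) X is a φ-prime submodule of M; (2) for all m ∈ M − X, (X:_R mR) = (X:_R M) ∪ (φ(X):_R mR); (3) for all m ∈ M − X, (X:_R mR) = (X:_R M) or (X:_R mR) = (φ(X):_R mR). -/
open MulOpposite Submodule

variable {R : Type*} [Ring R] {M : Type*} [AddCommGroup M] [Module Rᵐᵒᵖ M]

/-- The product `Y·A` of a set of elements of a right `R`-module `M` and a set of ring
elements: the submodule of all finite sums `Σ yᵢ·aᵢ` with `yᵢ ∈ Y`, `aᵢ ∈ A`. -/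
def sProd (Y : Set M) (A : Set R) : Submodule Rᵐᵒᵖ M :=
  Submodule.span Rᵐᵒᵖ {z | ∃ y ∈ Y, ∃ a ∈ A, z = op a • y}

/-- `(X :_R N) = {r : R | N·r ⊆ X}`. -/
def colR (X : Set M) (N : Set M) : Set R := {r | ∀ m ∈ N, op r • m ∈ X}

/-- `(X :_M A) = {m : M | m·A ⊆ X}`. -/
def colM (X : Set M) (A : Set R) : Set M := {m | ∀ r ∈ A, op r • m ∈ X}

/-- A function `φ : S(M) → S(M) ∪ {∅}` (values are either `∅` or submodules) with
`φ(X) ⊆ X` for every submodule `X`. -/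
def GoodPhi (φ : Submodule Rᵐᵒᵖ M → Set M) : Prop :=
  ∀ N : Submodule Rᵐᵒᵖ M, φ N ⊆ N ∧
    (φ N = (∅ : Set M) ∨ ∃ P : Submodule Rᵐᵒᵖ M, φ N = (P : Set M))

/-- `X` is a φ-prime submodule of the right `R`-module `M`. -/
def PhiPrime (φ : Submodule Rᵐᵒᵖ M → Set M) (X : Submodule Rᵐᵒᵖ M) : Prop :=
  X ≠ ⊤ ∧ ∀ (Y : Submodule Rᵐᵒᵖ M) (I : TwoSidedIdeal R),
    (sProd (Y : Set M) (I : Set R) : Set M) ⊆ (X : Set M) →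
    ¬((sProd (Y : Set M) (I : Set R) : Set M) ⊆ φ X) →
    (Y : Set M) ⊆ (X : Set M) ∨ (I : Set R) ⊆ colR (X : Set M) Set.univ

/-- `X` is a prime submodule of the right `R`-module `M`. -/
def PrimeSub (X : Submodule Rᵐᵒᵖ M) : Prop :=
  X ≠ ⊤ ∧ ∀ (Y : Submodule Rᵐᵒᵖ M) (I : TwoSidedIdeal R),
    (sProd (Y : Set M) (I : Set R) : Set M) ⊆ (X : Set M) →
    (Y : Set M) ⊆ (X : Set M) ∨ (I : Set R) ⊆ colR (X : Set M) Set.univ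

/-- `X` is a weakly prime submodule of the right `R`-module `M`. -/
def WeaklyPrime (X : Submodule Rᵐᵒᵖ M) : Prop :=
  X ≠ ⊤ ∧ ∀ (Y : Submodule Rᵐᵒᵖ M) (I : TwoSidedIdeal R),
    sProd (Y : Set M) (I : Set R) ≠ ⊥ →
    (sProd (Y : Set M) (I : Set R) : Set M) ⊆ (X : Set M) →
    (Y : Set M) ⊆ (X : Set M) ∨ (I : Set R) ⊆ colR (X : Set M) Set.univ

/-- `X` is an almost prime submodule of the right `R`-module `M`. -/
def AlmostPrime (X : Submodule Rᵐᵒᵖ M) : Prop :=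
  X ≠ ⊤ ∧ ∀ (Y : Submodule Rᵐᵒᵖ M) (I : TwoSidedIdeal R),
    (sProd (Y : Set M) (I : Set R) : Set M) ⊆ (X : Set M) →
    ¬((sProd (Y : Set M) (I : Set R) : Set M) ⊆
        (sProd (X : Set M) ((colR (X : Set M) Set.univ : Set R)) : Set M)) →
    (Y : Set M) ⊆ (X : Set M) ∨ (I : Set R) ⊆ colR (X : Set M) Set.univ

/-- `powAct X n = X (X :_R M)ⁿ`. -/
def powAct (X : Submodule Rᵐᵒᵖ M) : ℕ → Submodule Rᵐᵒᵖ M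
  | 0 => X
  | n + 1 => sProd (powAct X n : Set M) ((colR (X : Set M) Set.univ : Set R))

/-- The product of two sets of ring elements: all finite sums `Σ aᵢbᵢ`, `aᵢ ∈ A`, `bᵢ ∈ B`. -/
def idMul (A B : Set R) : Set R :=
  (AddSubmonoid.closure {x | ∃ a ∈ A, ∃ b ∈ B, x = a * b} : AddSubmonoid R)

/-- A prime (two-sided) ideal of a possibly noncommutative ring. -/
def TIPrime (P : TwoSidedIdeal R) : Prop :=
  (P : Set R) ≠ Set.univ ∧ ∀ I J : TwoSidedIdeal R,
    idMul (I : Set R) (J : Set R) ⊆ (P : Set R) →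
    (I : Set R) ⊆ (P : Set R) ∨ (J : Set R) ⊆ (P : Set R)

/-- The radical `√A`: the intersection of all prime two-sided ideals containing `A`. -/
def radSet (A : Set R) : Set R :=
  {x | ∀ P : TwoSidedIdeal R, TIPrime P → A ⊆ (P : Set R) → x ∈ (P : Set R)}

/-- A ψ-prime two-sided ideal of a possibly noncommutative ring. -/
def PsiPrime (ψ : TwoSidedIdeal R → Set R) (A : TwoSidedIdeal R) : Prop :=
  (A : Set R) ≠ Set.univ ∧ ∀ I J : TwoSidedIdeal R,
    idMul (I : Set R) (J : Set R) ⊆ (A : Set R) →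
    ¬(idMul (I : Set R) (J : Set R) ⊆ ψ A) →
    (I : Set R) ⊆ (A : Set R) ∨ (J : Set R) ⊆ (A : Set R)

/-- The induced function `φ_Y` on submodules of `M/Y`: `φ_Y(X/Y) = (φ(X)+Y)/Y`. -/
def phiQuot (φ : Submodule Rᵐᵒᵖ M → Set M) (Y : Submodule Rᵐᵒᵖ M) :
    Submodule Rᵐᵒᵖ (M ⧸ Y) → Set (M ⧸ Y) :=
  fun Q => Y.mkQ '' (φ (Q.comap Y.mkQ))

/-- The colon `(X :_R Y)` of two submodules, as a two-sided ideal of `R`. -/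
def colTI (X Y : Submodule Rᵐᵒᵖ M) : TwoSidedIdeal R :=
  TwoSidedIdeal.mk' (colR (X : Set M) (Y : Set M))
    (by intro m hm; simp)
    (by intro x y hx hy m hm
        rw [op_add, add_smul]
        exact X.add_mem (hx m hm) (hy m hm))
    (by intro x hx m hm
        rw [op_neg, neg_smul]
        exact X.neg_mem (hx m hm))
    (by intro x y hy m hm
        rw [op_mul, mul_smul]
        exact hy _ (Y.smul_mem (op x) hm))
    (by intro x y hx m hm
        rw [op_mul, mul_smul]
        exact X.smul_mem (op y) (hx m hm))

/-- The colon `(X :_M I)` as a submodule of `M`, for a two-sided ideal `I`. -/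
def colMS (X : Submodule Rᵐᵒᵖ M) (I : TwoSidedIdeal R) : Submodule Rᵐᵒᵖ M where
  carrier := colM (X : Set M) (I : Set R)
  add_mem' := by
    intro a b ha hb r hr
    rw [smul_add]
    exact X.add_mem (ha r hr) (hb r hr)
  zero_mem' := by
    intro r hr
    rw [smul_zero]
    exact X.zero_mem
  smul_mem' := by
    intro c m hm r hr
    rw [← mul_smul, show op r * c = op (unop c * r) from by rw [op_mul, op_unop]]
    exact hm _ (I.mul_mem_left _ _ hr)

/-- `M` is a multiplication right `R`-module: every submodule `X` equals `M(X :_R M)`. -/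
def IsMultiplication (R : Type*) [Ring R] (M : Type*) [AddCommGroup M]
    [Module Rᵐᵒᵖ M] : Prop :=
  ∀ X : Submodule Rᵐᵒᵖ M, X = sProd (Set.univ : Set M) ((colR (X : Set M) Set.univ : Set R))

/-- The product `XY = M(X :_R M)(Y :_R M)` of two submodules of a multiplication module. -/
def mprod (X Y : Submodule Rᵐᵒᵖ M) : Submodule Rᵐᵒᵖ M :=
  sProd ((sProd (Set.univ : Set M) ((colR (X : Set M) Set.univ : Set R)) : Submodule Rᵐᵒᵖ M) : Set M)
    ((colR (Y : Set M) Set.univ : Set R))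

/-- A φ-m-system in a right `R`-module `M`. -/
def PhiMSystem (φ : Submodule Rᵐᵒᵖ M → Set M) (S : Set M) : Prop :=
  S.Nonempty ∧ ∀ (Y₁ Y₂ : Submodule Rᵐᵒᵖ M) (I : TwoSidedIdeal R),
    ((Y₁ ⊔ Y₂ : Submodule Rᵐᵒᵖ M) : Set M) ∩ S ≠ ∅ →
    ((Y₁ ⊔ sProd (Set.univ : Set M) (I : Set R) : Submodule Rᵐᵒᵖ M) : Set M) ∩ S ≠ ∅ →
    ¬((sProd (Y₂ : Set M) (I : Set R) : Set M) ⊆ φ (Submodule.span Rᵐᵒᵖ Sᶜ)) →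
    ((Y₁ ⊔ sProd (Y₂ : Set M) (I : Set R) : Submodule Rᵐᵒᵖ M) : Set M) ∩ S ≠ ∅

/-!
If `A ⊆ B ∪ C` with `A`, `B` additive subgroups and `C` merely closed under subtraction (it is
empty when `φ(X)` is), an element of `A \ B` plus an element of `A \ C` lies in
neither `B` nor `C`; this turns the union in (2) into the dichotomy (3). For (1) ⇒ (3) apply
φ-primeness to `Y = mR` and `I = (X :_R mR)`. For (3) ⇒ (1), every `y ∈ Y \ X` satisfies
`yI ⊆ φ(X)` once `I ⊄ (X :_R M)`, and the same union argument spreads this to all of `Y`.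
-/

theorem subset_or_subset_of_subset_union {G : Type*} [AddCommGroup G] {A B C : Set G}
    (hA : ∀ x ∈ A, ∀ y ∈ A, x + y ∈ A) (hB : ∀ x ∈ B, ∀ y ∈ B, x - y ∈ B)
    (hC : ∀ x ∈ C, ∀ y ∈ C, x - y ∈ C) (h : A ⊆ B ∪ C) : A ⊆ B ∨ A ⊆ C := by
  by_contra! hne
  obtain ⟨⟨a, haA, haB⟩, ⟨b, hbA, hbC⟩⟩ := And.imp Set.not_subset.1 Set.not_subset.1 hne
  have haC : a ∈ C := (h haA).resolve_left haB
  have hbB : b ∈ B := (h hbA).resolve_right hbC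
  rcases h (hA a haA b hbA) with hab | hab
  · exact haB (by simpa using hB _ hab _ hbB)
  · exact hbC (by simpa using hC _ hab _ haC)

theorem colR_mono_left {S T : Set M} (h : S ⊆ T) (N : Set M) : colR S N ⊆ (colR T N : Set R) :=
  fun _ hr m hm => h (hr m hm)

theorem colR_anti_right (S : Set M) {N N' : Set M} (h : N ⊆ N') :
    colR S N' ⊆ (colR S N : Set R) :=
  fun _ hr m hm => hr m (h hm)

theorem colR_add_mem (X : Submodule Rᵐᵒᵖ M) (N : Set M) :
    ∀ r ∈ (colR (X : Set M) N : Set R), ∀ s ∈ colR (X : Set M) N,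
      r + s ∈ colR (X : Set M) N :=
  fun r hr s hs m hm => by
    rw [op_add, add_smul]
    exact X.add_mem (hr m hm) (hs m hm)

theorem colR_sub_mem {S : Set M} (hS : ∀ x ∈ S, ∀ y ∈ S, x - y ∈ S) (N : Set M) :
    ∀ r ∈ (colR S N : Set R), ∀ s ∈ colR S N, r - s ∈ colR S N :=
  fun r hr s hs m hm => by
    rw [op_sub, sub_smul]
    exact hS _ (hr m hm) _ (hs m hm)

theorem colM_sub_mem {S : Set M} (hS : ∀ x ∈ S, ∀ y ∈ S, x - y ∈ S) (A : Set R) :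
    ∀ x ∈ colM S A, ∀ y ∈ colM S A, x - y ∈ colM S A :=
  fun x hx y hy r hr => by
    rw [smul_sub]
    exact hS _ (hx r hr) _ (hy r hr)

theorem subset_colM_iff_subset_colR {S Y : Set M} {A : Set R} :
    Y ⊆ colM S A ↔ A ⊆ colR S Y :=
  ⟨fun h _ ha _ hy => h hy _ ha, fun h _ hy _ ha => h ha _ hy⟩

theorem subset_colR_of_sProd_subset {S Y : Set M} {A : Set R}
    (h : (sProd Y A : Set M) ⊆ S) : A ⊆ colR S Y :=
  fun a ha y hy => h (subset_span ⟨y, hy, a, ha, rfl⟩)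

theorem sProd_le_iff {Y : Set M} {A : Set R} {N : Submodule Rᵐᵒᵖ M} :
    sProd Y A ≤ N ↔ A ⊆ colR (N : Set M) Y := by
  refine ⟨subset_colR_of_sProd_subset, fun h => span_le.2 ?_⟩
  rintro _ ⟨y, hy, a, ha, rfl⟩
  exact h ha y hy

theorem colTI_coe (X Y : Submodule Rᵐᵒᵖ M) :
    ((colTI X Y : TwoSidedIdeal R) : Set R) = colR (X : Set M) (Y : Set M) :=
  TwoSidedIdeal.coe_mk' _ _ _ _ _ _

namespace GoodPhi

variable {φ : Submodule Rᵐᵒᵖ M → Set M}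

theorem sub_mem (hφ : GoodPhi φ) (N : Submodule Rᵐᵒᵖ M) :
    ∀ x ∈ φ N, ∀ y ∈ φ N, x - y ∈ φ N := by
  rcases (hφ N).2 with h | ⟨P, h⟩ <;> rw [h]
  · simp
  · exact fun x hx y hy => P.sub_mem hx hy

theorem sProd_subset (hφ : GoodPhi φ) (N Y : Submodule Rᵐᵒᵖ M) (I : TwoSidedIdeal R)
    (h : (Y : Set M) ⊆ colM (φ N) (I : Set R)) :
    (sProd (Y : Set M) (I : Set R) : Set M) ⊆ φ N := by
  rcases (hφ N).2 with h0 | ⟨P, hP⟩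
  · have := h Y.zero_mem 0 I.zero_mem
    rw [h0] at this
    exact this.elim
  · rw [hP] at h ⊢
    exact sProd_le_iff.2 (subset_colM_iff_subset_colR.1 h)

end GoodPhi

section Equivalences

variable {φ : Submodule Rᵐᵒᵖ M → Set M} {X : Submodule Rᵐᵒᵖ M}

theorem PhiPrime.colR_span_singleton_eq_or_eq (hφX : φ X ⊆ X) (hprime : PhiPrime φ X) {m : M}
    (hm : m ∉ X) :
    (colR (X : Set M) (span Rᵐᵒᵖ ({m} : Set M) : Set M) : Set R) =
        colR (X : Set M) Set.univ ∨
      (colR (X : Set M) (span Rᵐᵒᵖ ({m} : Set M) : Set M) : Set R) =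
        colR (φ X) (span Rᵐᵒᵖ ({m} : Set M) : Set M) := by
  set Y := span Rᵐᵒᵖ ({m} : Set M)
  have hI : sProd (Y : Set M) (colTI X Y : Set R) ≤ X := sProd_le_iff.2 (colTI_coe X Y).le
  by_cases hYφ : (sProd (Y : Set M) (colTI X Y : Set R) : Set M) ⊆ φ X
  · right
    exact (colR_mono_left hφX _).antisymm' (colTI_coe X Y ▸ subset_colR_of_sProd_subset hYφ)
  · rcases hprime.2 Y _ hI hYφ with hYX | hIX
    · exact absurd (hYX (mem_span_singleton_self m)) hm
    · left
      exact (colR_anti_right _ (Set.subset_univ _)).antisymm' (colTI_coe X Y ▸ hIX)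

theorem colR_eq_union_of_eq_or_eq (hφX : φ X ⊆ X) {N : Set M}
    (h : (colR (X : Set M) N : Set R) = colR (X : Set M) Set.univ ∨
      (colR (X : Set M) N : Set R) = colR (φ X) N) :
    (colR (X : Set M) N : Set R) = colR (X : Set M) Set.univ ∪ colR (φ X) N := by
  refine h.elim (fun h => ?_) (fun h => ?_) <;>
    refine Set.Subset.antisymm ?_
      (Set.union_subset (colR_anti_right _ (Set.subset_univ _)) (colR_mono_left hφX _))
  · exact h ▸ Set.subset_union_left
  · exact h ▸ Set.subset_union_right

theorem colR_eq_or_eq_of_eq_union (hφ : GoodPhi φ) {N : Set M}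
    (h : (colR (X : Set M) N : Set R) = colR (X : Set M) Set.univ ∪ colR (φ X) N) :
    (colR (X : Set M) N : Set R) = colR (X : Set M) Set.univ ∨
      (colR (X : Set M) N : Set R) = colR (φ X) N := by
  rcases subset_or_subset_of_subset_union (colR_add_mem X N)
      (colR_sub_mem (fun x hx y hy => X.sub_mem hx hy) _) (colR_sub_mem (hφ.sub_mem X) N)
      h.subset with h | h
  · exact Or.inl (h.antisymm (colR_anti_right _ (Set.subset_univ _)))
  · exact Or.inr (h.antisymm (colR_mono_left (hφ X).1 N))

theorem phiPrime_of_colR_span_singleton_eq_or_eq (hφ : GoodPhi φ) (hX : X ≠ ⊤)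
    (h : ∀ m : M, m ∉ X →
      (colR (X : Set M) (span Rᵐᵒᵖ ({m} : Set M) : Set M) : Set R) =
          colR (X : Set M) Set.univ ∨
        (colR (X : Set M) (span Rᵐᵒᵖ ({m} : Set M) : Set M) : Set R) =
          colR (φ X) (span Rᵐᵒᵖ ({m} : Set M) : Set M)) :
    PhiPrime φ X := by
  refine ⟨hX, fun Y I hI hIφ => ?_⟩
  by_contra hcon
  rw [not_or] at hcon
  have hcover : (Y : Set M) ⊆ X ∪ colM (φ X) (I : Set R) := by
    intro y hy
    by_cases hyX : y ∈ X
    · exact Or.inl hyX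
    have hIy : (I : Set R) ⊆ colR (X : Set M) (span Rᵐᵒᵖ ({y} : Set M) : Set M) :=
      (subset_colR_of_sProd_subset hI).trans
        (colR_anti_right _ ((span_singleton_le_iff_mem y Y).2 hy))
    rcases h y hyX with hM | hφy
    · exact (hcon.2 (hM ▸ hIy)).elim
    · exact Or.inr fun a ha => (hφy ▸ hIy) ha y (mem_span_singleton_self y)
  rcases subset_or_subset_of_subset_union (fun x hx y hy => Y.add_mem hx hy)
      (fun x hx y hy => X.sub_mem hx hy) (colM_sub_mem (hφ.sub_mem X) _) hcover with hYX | hYφ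
  · exact hcon.1 hYX
  · exact hIφ (hφ.sProd_subset X Y I hYφ)

end Equivalences

/-- For a proper submodule `X` of `M`, TFAE:
(1) `X` is φ-prime; (2) for all `m ∈ M − X`,
`(X :_R mR) = (X :_R M) ∪ (φ(X) :_R mR)`; (3) for all `m ∈ M − X`,
`(X :_R mR) = (X :_R M)` or `(X :_R mR) = (φ(X) :_R mR)`. -/
theorem stmt_0 (φ : Submodule Rᵐᵒᵖ M → Set M) (hφ : GoodPhi φ)
    (X : Submodule Rᵐᵒᵖ M) (hX : X ≠ ⊤) :
    [PhiPrime φ X,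
     ∀ m : M, m ∉ X →
       (colR (X : Set M) (Submodule.span Rᵐᵒᵖ ({m} : Set M) : Set M) : Set R) =
         (colR (X : Set M) Set.univ : Set R) ∪
           (colR (φ X) (Submodule.span Rᵐᵒᵖ ({m} : Set M) : Set M) : Set R),
     ∀ m : M, m ∉ X →
       (colR (X : Set M) (Submodule.span Rᵐᵒᵖ ({m} : Set M) : Set M) : Set R) =
           (colR (X : Set M) Set.univ : Set R) ∨
         (colR (X : Set M) (Submodule.span Rᵐᵒᵖ ({m} : Set M) : Set M) : Set R) =
           (colR (φ X) (Submodule.span Rᵐᵒᵖ ({m} : Set M) : Set M) : Set R)].TFAE := by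
  tfae_have 1 → 3 := fun h m hm => h.colR_span_singleton_eq_or_eq (hφ X).1 hm
  tfae_have 3 → 2 := fun h m hm => colR_eq_union_of_eq_or_eq (hφ X).1 (h m hm)
  tfae_have 2 → 3 := fun h m hm => colR_eq_or_eq_of_eq_union hφ (h m hm)
  tfae_have 3 → 1 := phiPrime_of_colR_span_singleton_eq_or_eq hφ hX
  tfae_finish
end

section
/- Let X and Y be proper submodules of M with Y ⊆ X. Then: (1) if X is a φ-prime submodule of M, then X/Y is a φ_Y-prime submodule of M/Y; (2) if Y ⊆ φ(X) and X/Y is a φ_Y-prime submodule of M/Y, then X is a φ-prime submodule of M. -/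
open MulOpposite Submodule

variable {R : Type*} [Ring R] {M : Type*} [AddCommGroup M] [Module Rᵐᵒᵖ M]

/-!
For `Y ≤ X`, taking images under `M → M/Y` is an order isomorphism between the submodules of `M`
containing `Y` and those of `M/Y`; it commutes with the products `Z·I`, and it identifies
`(X/Y :_R M/Y)` with `(X :_R M)` and `φ_Y(X/Y)` with the image of `φ(X)`. So the φ-prime
conditions on both sides match, except that `Z·I ⊄ φ(X)` only implies
`(Z/Y)·I ⊄ (φ(X)+Y)/Y` when `Y ⊆ φ(X)`: then `φ(X)` is a nonempty value of `φ`, hence a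
submodule containing `Y`, and the correspondence applies to it as well.
-/

lemma sProd_image {N : Type*} [AddCommGroup N] [Module Rᵐᵒᵖ N]
    (f : M →ₗ[Rᵐᵒᵖ] N) (S : Set M) (A : Set R) :
    sProd (f '' S) A = (sProd S A).map f := by
  rw [sProd, sProd, Submodule.map_span]
  congr 1
  ext z
  constructor
  · rintro ⟨_, ⟨y, hy, rfl⟩, a, ha, rfl⟩
    exact ⟨op a • y, ⟨y, hy, a, ha, rfl⟩, map_smul f _ y⟩
  · rintro ⟨w, ⟨y, hy, a, ha, rfl⟩, rfl⟩
    exact ⟨f y, ⟨y, hy, rfl⟩, a, ha, map_smul f (op a) y⟩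

lemma GoodPhi.exists_eq_of_nonempty {φ : Submodule Rᵐᵒᵖ M → Set M} (hφ : GoodPhi φ)
    {N : Submodule Rᵐᵒᵖ M} (hN : (φ N).Nonempty) : ∃ P : Submodule Rᵐᵒᵖ M, φ N = P :=
  (hφ N).2.resolve_left hN.ne_empty

section Quotient

variable {X Y : Submodule Rᵐᵒᵖ M}

lemma map_mkQ_le_map_mkQ_iff (hYX : Y ≤ X) {Z : Submodule Rᵐᵒᵖ M} :
    Z.map Y.mkQ ≤ X.map Y.mkQ ↔ Z ≤ X := by
  rw [LinearMap.map_le_map_iff, ker_mkQ, sup_eq_left.mpr hYX]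

lemma comap_mkQ_map_mkQ (hYX : Y ≤ X) : (X.map Y.mkQ).comap Y.mkQ = X := by
  rw [comap_map_mkQ, sup_eq_right.mpr hYX]

lemma map_mkQ_ne_top_iff (hYX : Y ≤ X) : X.map Y.mkQ ≠ ⊤ ↔ X ≠ ⊤ := by
  refine not_congr ⟨fun h => ?_, fun h => by rw [h, Submodule.map_top, range_mkQ]⟩
  rw [← comap_mkQ_map_mkQ hYX, h, comap_top]

lemma colR_map_mkQ (hYX : Y ≤ X) :
    colR (X.map Y.mkQ : Set (M ⧸ Y)) Set.univ = (colR (X : Set M) Set.univ : Set R) := by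
  ext r
  simp only [colR, Set.mem_univ, forall_const, Set.mem_ofPred_eq, SetLike.mem_coe]
  constructor
  · intro h m
    rw [← comap_mkQ_map_mkQ hYX, mem_comap, map_smul]
    exact h _
  · intro h q
    obtain ⟨m, rfl⟩ := Y.mkQ_surjective q
    rw [← map_smul]
    exact mem_map_of_mem (h m)

lemma phiQuot_map_mkQ (φ : Submodule Rᵐᵒᵖ M → Set M) (hYX : Y ≤ X) :
    phiQuot φ Y (X.map Y.mkQ) = Y.mkQ '' φ X := by
  rw [phiQuot, comap_mkQ_map_mkQ hYX]

end Quotient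

theorem stmt_6_general (φ : Submodule Rᵐᵒᵖ M → Set M) (hφ : GoodPhi φ)
    (X Y : Submodule Rᵐᵒᵖ M) (hYX : Y ≤ X) :
    (PhiPrime φ X → PhiPrime (phiQuot φ Y) (X.map Y.mkQ)) ∧
    ((Y : Set M) ⊆ φ X → PhiPrime (phiQuot φ Y) (X.map Y.mkQ) → PhiPrime φ X) := by
  have hprod (Z : Submodule Rᵐᵒᵖ M) (I : TwoSidedIdeal R) :
      sProd (Z.map Y.mkQ : Set (M ⧸ Y)) (I : Set R) = (sProd (Z : Set M) I).map Y.mkQ := by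
    rw [map_coe, sProd_image]
  constructor
  · rintro ⟨hX, hprime⟩
    refine ⟨(map_mkQ_ne_top_iff hYX).2 hX, fun Z I hZI hZIφ => ?_⟩
    obtain ⟨Z, rfl⟩ : ∃ Z' : Submodule Rᵐᵒᵖ M, Z'.map Y.mkQ = Z :=
      ⟨_, map_comap_eq_of_surjective Y.mkQ_surjective Z⟩
    rw [hprod, SetLike.coe_subset_coe, map_mkQ_le_map_mkQ_iff hYX] at hZI
    rw [hprod, map_coe, phiQuot_map_mkQ φ hYX] at hZIφ
    rw [SetLike.coe_subset_coe, map_mkQ_le_map_mkQ_iff hYX, colR_map_mkQ hYX]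
    exact hprime Z I hZI fun h => hZIφ (Set.image_mono h)
  · rintro hYφ ⟨hX, hprime⟩
    refine ⟨(map_mkQ_ne_top_iff hYX).1 hX, fun Z I hZI hZIφ => ?_⟩
    obtain ⟨P, hP⟩ := hφ.exists_eq_of_nonempty ⟨0, hYφ Y.zero_mem⟩
    rw [hP] at hYφ hZIφ
    have hZI' : sProd (Z.map Y.mkQ : Set (M ⧸ Y)) (I : Set R) ≤ X.map Y.mkQ := by
      rwa [hprod, map_mkQ_le_map_mkQ_iff hYX]
    have hZIφ' : ¬(sProd (Z.map Y.mkQ : Set (M ⧸ Y)) (I : Set R) : Set (M ⧸ Y)) ⊆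
        phiQuot φ Y (X.map Y.mkQ) := by
      rwa [phiQuot_map_mkQ φ hYX, hP, hprod, ← map_coe, SetLike.coe_subset_coe,
        map_mkQ_le_map_mkQ_iff hYφ]
    simpa only [SetLike.coe_subset_coe, map_mkQ_le_map_mkQ_iff hYX, colR_map_mkQ hYX]
      using hprime _ I hZI' hZIφ'

/-- Let `X, Y` be proper submodules of `M` with `Y ⊆ X`. Then:
(1) if `X` is φ-prime, then `X/Y` is `φ_Y`-prime in `M/Y`;
(2) if `Y ⊆ φ(X)` and `X/Y` is `φ_Y`-prime in `M/Y`, then `X` is φ-prime. -/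
theorem stmt_6 (φ : Submodule Rᵐᵒᵖ M → Set M) (hφ : GoodPhi φ)
    (X Y : Submodule Rᵐᵒᵖ M) (hX : X ≠ ⊤) (hY : Y ≠ ⊤) (hYX : Y ≤ X) :
    (PhiPrime φ X → PhiPrime (phiQuot φ Y) (X.map Y.mkQ)) ∧
    ((Y : Set M) ⊆ φ X → PhiPrime (phiQuot φ Y) (X.map Y.mkQ) → PhiPrime φ X) :=
  stmt_6_general φ hφ X Y hYX
end

section
/- Let a ∈ R with a ≠ 0 be such that Ma = {ma : m ∈ M} is a submodule of M, (0:_M a) ⊆ Ma, and a(Ma:_R M) = (Ma:_R M)a. Then Ma is a prime submodule of M if and only if Ma is an almost prime submodule of M. -/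
open MulOpposite Submodule

variable {R : Type*} [Ring R] {M : Type*} [AddCommGroup M] [Module Rᵐᵒᵖ M]

/-! Suppose `YI ⊆ N = Ma` and enlarge `I` to `I' = I + (N :_R M)`, which still has `YI' ⊆ N`.
If `YI' ⊄ N(N :_R M)`, almost primeness gives `Y ⊆ N` or `I ⊆ I' ⊆ (N :_R M)`. Otherwise, as
`a ∈ (N :_R M)`, every `y ∈ Y` has `ya ∈ N(N :_R M) ⊆ Na`, the last inclusion because
`a(N :_R M) ⊆ (N :_R M)a` moves `a` past the colon ideal; so `ya = na` with `n ∈ N`, and then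
`y - n ∈ (0 :_M a) ⊆ N` gives `y ∈ N`. -/

theorem mem_colTI_top_iff {X : Submodule Rᵐᵒᵖ M} {r : R} :
    r ∈ colTI X ⊤ ↔ ∀ m : M, op r • m ∈ X :=
  (TwoSidedIdeal.mem_mk' _ _ _ _ _ _ _).trans ⟨fun h m => h m trivial, fun h m _ => h m⟩

theorem mem_colR_univ_of_coe_eq_range {a : R} {N : Submodule Rᵐᵒᵖ M}
    (hN : (N : Set M) = Set.range fun m : M => op a • m) : a ∈ colR (N : Set M) Set.univ :=
  fun m _ => by rw [hN]; exact ⟨m, rfl⟩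

theorem PrimeSub.almostPrime {X : Submodule Rᵐᵒᵖ M} (hX : PrimeSub X) : AlmostPrime X :=
  ⟨hX.1, fun Y I hYI _ => hX.2 Y I hYI⟩

theorem AlmostPrime.primeSub_of_smul_mem {X : Submodule Rᵐᵒᵖ M} (hX : AlmostPrime X) {a : R}
    (ha : a ∈ colR (X : Set M) Set.univ)
    (hcancel : ∀ y : M, op a • y ∈ sProd (X : Set M) (colR (X : Set M) Set.univ : Set R) → y ∈ X) :
    PrimeSub X := by
  refine ⟨hX.1, fun Y I hYI => ?_⟩
  set I' : TwoSidedIdeal R := I ⊔ colTI X ⊤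
  have hYI' : (sProd (Y : Set M) (I' : Set R) : Set M) ⊆ X := by
    refine Submodule.span_le.2 ?_
    rintro z ⟨y, hy, b, hb, rfl⟩
    obtain ⟨b₁, hb₁, b₂, hb₂, rfl⟩ := TwoSidedIdeal.mem_sup.1 hb
    rw [op_add, add_smul]
    exact X.add_mem (hYI (Submodule.subset_span ⟨y, hy, b₁, hb₁, rfl⟩))
      (mem_colTI_top_iff.1 hb₂ y)
  by_cases hsub : (sProd (Y : Set M) (I' : Set R) : Set M) ⊆
      sProd (X : Set M) (colR (X : Set M) Set.univ : Set R)
  · have haI' : a ∈ I' :=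
      TwoSidedIdeal.mem_sup_right (mem_colTI_top_iff.2 fun m => ha m (Set.mem_univ m))
    exact Or.inl fun y hy => hcancel y (hsub (Submodule.subset_span ⟨y, hy, a, haI', rfl⟩))
  · exact (hX.2 Y I' hYI' hsub).imp id fun hI' _ hb => hI' (TwoSidedIdeal.mem_sup_left hb)

theorem sProd_colR_subset_image_smul {a : R} {N : Submodule Rᵐᵒᵖ M}
    (hN : (N : Set M) = Set.range fun m : M => op a • m)
    (hc : ∀ b ∈ colR (N : Set M) Set.univ, ∃ c ∈ colR (N : Set M) Set.univ, a * b = c * a) :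
    (sProd (N : Set M) (colR (N : Set M) Set.univ : Set R) : Set M) ⊆ (op a • ·) '' N := by
  set J : Set R := colR (N : Set M) Set.univ
  have haJ : a ∈ J := mem_colR_univ_of_coe_eq_range hN
  have hJ_mul : ∀ b ∈ J, ∀ s : R, b * s ∈ J := fun b hb s m _ => by
    rw [op_mul, mul_smul]
    exact N.smul_mem _ (hb m trivial)
  have key : ∀ b ∈ J, ∀ m : M, op (a * b) • m ∈ (op a • ·) '' N := fun b hb m => by
    obtain ⟨c, hcJ, hcb⟩ := hc b hb
    exact ⟨op c • m, hcJ m trivial, by rw [hcb, op_mul, mul_smul]⟩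
  intro x hx
  induction hx using Submodule.span_induction with
  | mem z hz =>
    obtain ⟨y, hy, b, hb, rfl⟩ := hz
    obtain ⟨m, rfl⟩ := (Set.ext_iff.1 hN y).1 hy
    simpa only [op_mul, mul_smul] using key b hb m
  | zero => exact ⟨0, N.zero_mem, smul_zero _⟩
  | add z w _ _ hz hw =>
    obtain ⟨n₁, hn₁, rfl⟩ := hz
    obtain ⟨n₂, hn₂, rfl⟩ := hw
    exact ⟨n₁ + n₂, N.add_mem hn₁ hn₂, smul_add _ _ _⟩
  | smul r z _ hz =>
    obtain ⟨n, hn, rfl⟩ := hz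
    obtain ⟨m, rfl⟩ := (Set.ext_iff.1 hN n).1 hn
    have := key _ (hJ_mul a haJ r.unop) m
    simpa only [op_mul, mul_smul, op_unop] using this

theorem mem_of_smul_mem_image_smul {a : R} {N : Submodule Rᵐᵒᵖ M}
    (h0 : {m : M | op a • m = 0} ⊆ (N : Set M)) {y : M} (hy : op a • y ∈ (op a • ·) '' N) :
    y ∈ N := by
  obtain ⟨n, hn, hny⟩ := hy
  have hker : y - n ∈ N := h0 (show op a • (y - n) = 0 by rw [smul_sub, ← hny, sub_self])
  simpa only [sub_add_cancel] using N.add_mem hker hn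

theorem stmt_10_general (a : R) (N : Submodule Rᵐᵒᵖ M)
    (hN : (N : Set M) = Set.range fun m : M => op a • m)
    (h0 : {m : M | op a • m = 0} ⊆ (N : Set M))
    (hc : {x : R | ∃ b ∈ (colR (N : Set M) Set.univ : Set R), x = a * b} =
          {x : R | ∃ b ∈ (colR (N : Set M) Set.univ : Set R), x = b * a}) :
    PrimeSub N ↔ AlmostPrime N := by
  refine ⟨PrimeSub.almostPrime, fun hA =>
    AlmostPrime.primeSub_of_smul_mem hA (mem_colR_univ_of_coe_eq_range hN)
    fun y hy => mem_of_smul_mem_image_smul h0 ?_⟩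
  have hc' : ∀ b ∈ colR (N : Set M) Set.univ, ∃ c ∈ colR (N : Set M) Set.univ,
      a * b = c * a := fun b hb =>
    show a * b ∈ {x : R | ∃ c ∈ colR (N : Set M) Set.univ, x = c * a} from hc ▸ ⟨b, hb, rfl⟩
  exact sProd_colR_subset_image_smul hN hc' hy

/-- Let `0 ≠ a ∈ R` be such that `Ma = {m·a : m ∈ M}` is a
submodule `N` of `M`, `(0 :_M a) ⊆ Ma` and `a(Ma :_R M) = (Ma :_R M)a`. Then `Ma`
is a prime submodule of `M` iff `Ma` is an almost prime submodule of `M`. -/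
theorem stmt_10 (a : R) (ha : a ≠ 0) (N : Submodule Rᵐᵒᵖ M)
    (hN : (N : Set M) = Set.range fun m : M => op a • m)
    (h0 : {m : M | op a • m = 0} ⊆ (N : Set M))
    (hc : {x : R | ∃ b ∈ (colR (N : Set M) Set.univ : Set R), x = a * b} =
          {x : R | ∃ b ∈ (colR (N : Set M) Set.univ : Set R), x = b * a}) :
    PrimeSub N ↔ AlmostPrime N :=
  stmt_10_general a N hN h0 hc
end
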